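/- Define b₁, b₂, b₃ : ℝ → ℝ by: b₁(s) = e^{1/s} for s < 0, b₁(s) = e^{−1/(s−2)} for s > 2, and b₁(s) = 0 otherwise; b₂(s) = e^{−1/(s(1−s))} for 0 < s < 1 and b₂(s) = 0 otherwise; b₃(s) = e^{−1/((s−1)(2−s))} for 1 < s < 2 and b₃(s) = 0 otherwise. If γ : ℝ → ℝ⁴ is a regular curve parametrized by arc length admitting a Bishop frame whose coefficient matrix has above-diagonal entries X₁₂ = b₁, X₁₃ = b₂, X₁₄ = b₃ (all other above-diagonal entries zero), then γ does not admit any generalized Bishop frame of type C. -/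

import Mathlib

noncomputable section

open Set

abbrev E4 : Type := EuclideanSpace ℝ (Fin 4)
abbrev Mat4 : Type := Matrix (Fin 4) (Fin 4) ℝ

/-- A matrix-valued map is smooth on `I` (entrywise). -/
def SmoothMat (I : Set ℝ) (Z : ℝ → Mat4) : Prop :=
  ∀ i j, ContDiffOn ℝ (⊤ : ℕ∞) (fun s => Z s i j) I

/-- `Z' = X · Z` on `I`, derivatives taken entrywise. -/
def MatDerivEq (I : Set ℝ) (Z X : ℝ → Mat4) : Prop :=
  ∀ s ∈ I, ∀ i j, deriv (fun t => Z t i j) s = (X s * Z s) i j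

/-- A regular curve parametrized by arc length on `I`. -/
def IsRegularCurve (I : Set ℝ) (γ : ℝ → E4) : Prop :=
  ContDiffOn ℝ (⊤ : ℕ∞) γ I ∧ ∀ s ∈ I, ‖deriv γ s‖ = 1

def IsTwoRegularCurve (I : Set ℝ) (γ : ℝ → E4) : Prop :=
  IsRegularCurve I γ ∧ ∀ s ∈ I, deriv (deriv γ) s ≠ 0

/-- An orthonormal frame on `γ`: smooth, orthogonal, first row the tangent vector. -/
def IsFrameOn (I : Set ℝ) (γ : ℝ → E4) (Z : ℝ → Mat4) : Prop :=
  SmoothMat I Z ∧ (∀ s ∈ I, Z s ∈ Matrix.orthogonalGroup (Fin 4) ℝ) ∧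
    ∀ s ∈ I, ∀ i, Z s 0 i = deriv γ s i

def ShapeB (X : Mat4) : Prop := X 1 2 = 0 ∧ X 1 3 = 0 ∧ X 2 3 = 0
def ShapeC (X : Mat4) : Prop := X 0 3 = 0 ∧ X 1 2 = 0 ∧ X 2 3 = 0
def ShapeD (X : Mat4) : Prop := X 0 2 = 0 ∧ X 0 3 = 0 ∧ X 2 3 = 0
def ShapeF (X : Mat4) : Prop := X 0 2 = 0 ∧ X 0 3 = 0 ∧ X 1 3 = 0

/-- `γ` admits a generalized Bishop frame whose coefficient matrix has the given shape. -/
def AdmitsFrame (Shape : Mat4 → Prop) (I : Set ℝ) (γ : ℝ → E4) : Prop :=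
  ∃ Z X : ℝ → Mat4, IsFrameOn I γ Z ∧ MatDerivEq I Z X ∧ ∀ s ∈ I, Shape (X s)

def bump₁ : ℝ → ℝ := fun s =>
  if s < 0 then Real.exp (1 / s)
  else if 2 < s then Real.exp (-1 / (s - 2))
  else 0

def bump₂ : ℝ → ℝ := fun s =>
  if 0 < s ∧ s < 1 then Real.exp (-1 / (s * (1 - s))) else 0

def bump₃ : ℝ → ℝ := fun s =>
  if 1 < s ∧ s < 2 then Real.exp (-1 / ((s - 1) * (2 - s))) else 0

lemma star_eq_transpose (A : Mat4) : star A = A.transpose := by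
  ext i j; simp [Matrix.star_apply]

lemma frame_hasDerivAt (Z X : ℝ → Mat4)
    (hsm : SmoothMat Set.univ Z) (hde : MatDerivEq Set.univ Z X)
    (s : ℝ) (i j : Fin 4) :
    HasDerivAt (fun t => Z t i j) ((X s * Z s) i j) s := by
  have hdiff : Differentiable ℝ fun t => Z t i j :=
    (contDiffOn_univ.mp (hsm i j)).differentiable (by simp)
  have h := (hdiff s).hasDerivAt
  rwa [hde s trivial i j] at h

lemma frame_orth_mul (Z : ℝ → Mat4)
    (horth : ∀ s ∈ Set.univ, Z s ∈ Matrix.orthogonalGroup (Fin 4) ℝ) (t : ℝ) :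
    Z t * (Z t).transpose = 1 := by
  have := (Matrix.mem_orthogonalGroup_iff _ _).mp (horth t trivial)
  exact this

lemma frame_skew (Z X : ℝ → Mat4)
    (hsm : SmoothMat Set.univ Z)
    (horth : ∀ s ∈ Set.univ, Z s ∈ Matrix.orthogonalGroup (Fin 4) ℝ)
    (hde : MatDerivEq Set.univ Z X) (s : ℝ) (i j : Fin 4) :
    X s j i = - X s i j := by
  have hZ1 := frame_orth_mul Z horth
  have key : HasDerivAt (fun t => ∑ k, Z t i k * Z t j k)
      (∑ k, ((X s * Z s) i k * Z s j k + Z s i k * (X s * Z s) j k)) s :=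
    HasDerivAt.fun_sum fun k _ =>
      (frame_hasDerivAt Z X hsm hde s i k).mul (frame_hasDerivAt Z X hsm hde s j k)
  have hconst : (fun t => ∑ k, Z t i k * Z t j k) = fun _ => (1 : Mat4) i j := by
    funext t
    have := congrArg (fun M : Mat4 => M i j) (hZ1 t)
    simpa [Matrix.mul_apply] using this
  have hzero : HasDerivAt (fun t => ∑ k, Z t i k * Z t j k) 0 s := by
    rw [hconst]; exact hasDerivAt_const s _
  have hsum0 := key.unique hzero
  have e1 : ∑ k, (X s * Z s) i k * Z s j k = X s i j := by
    have h : ∑ k, (X s * Z s) i k * Z s j k = ((X s * Z s) * (Z s).transpose) i j := by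
      simp [Matrix.mul_apply]
    rw [h, Matrix.mul_assoc, hZ1 s, Matrix.mul_one]
  have e2 : ∑ k, Z s i k * (X s * Z s) j k = X s j i := by
    have h : ∑ k, Z s i k * (X s * Z s) j k = (Z s * ((X s * Z s).transpose)) i j := by
      simp [Matrix.mul_apply, Matrix.transpose_apply, mul_comm]
    rw [h, Matrix.transpose_mul, ← Matrix.mul_assoc, hZ1 s, Matrix.one_mul,
      Matrix.transpose_apply]
  rw [Finset.sum_add_distrib, e1, e2] at hsum0
  linarith

lemma sum_mul_transpose (A B : Mat4) (i j : Fin 4) :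
    ∑ k, A i k * B j k = (A * B.transpose) i j := by
  simp [Matrix.mul_apply]

lemma bump₁_pos_of_neg {s : ℝ} (h : s < 0) : 0 < bump₁ s := by
  unfold bump₁; rw [if_pos h]; exact Real.exp_pos _

lemma bump₁_pos_of_gt {s : ℝ} (h : 2 < s) : 0 < bump₁ s := by
  unfold bump₁; rw [if_neg (by linarith), if_pos h]; exact Real.exp_pos _

lemma bump₁_eq_zero {s : ℝ} (h0 : 0 ≤ s) (h2 : s ≤ 2) : bump₁ s = 0 := by
  unfold bump₁; rw [if_neg (by linarith), if_neg (by linarith)]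

lemma bump₂_pos {s : ℝ} (h0 : 0 < s) (h1 : s < 1) : 0 < bump₂ s := by
  unfold bump₂; rw [if_pos ⟨h0, h1⟩]; exact Real.exp_pos _

lemma bump₂_eq_zero {s : ℝ} (h : s ≤ 0 ∨ 1 ≤ s) : bump₂ s = 0 := by
  unfold bump₂
  rcases h with h | h
  · rw [if_neg (by rintro ⟨a, b⟩; linarith)]
  · rw [if_neg (by rintro ⟨a, b⟩; linarith)]

lemma bump₃_pos {s : ℝ} (h0 : 1 < s) (h1 : s < 2) : 0 < bump₃ s := by
  unfold bump₃; rw [if_pos ⟨h0, h1⟩]; exact Real.exp_pos _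

lemma bump₃_eq_zero {s : ℝ} (h : s ≤ 1 ∨ 2 ≤ s) : bump₃ s = 0 := by
  unfold bump₃
  rcases h with h | h
  · rw [if_neg (by rintro ⟨a, b⟩; linarith)]
  · rw [if_neg (by rintro ⟨a, b⟩; linarith)]

/-- A regular curve with a Bishop frame of curvatures bump₁, bump₂, bump₃ admits no
generalized Bishop frame of type C. -/
theorem no_typeC_example (γ : ℝ → E4) (hγ : IsRegularCurve Set.univ γ)
    (Z X : ℝ → Mat4) (hZ : IsFrameOn Set.univ γ Z) (hZX : MatDerivEq Set.univ Z X)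
    (hshape : ∀ s, ShapeB (X s))
    (h₁ : ∀ s, X s 0 1 = bump₁ s) (h₂ : ∀ s, X s 0 2 = bump₂ s)
    (h₃ : ∀ s, X s 0 3 = bump₃ s) :
    ¬ AdmitsFrame ShapeC Set.univ γ := by
  rintro ⟨W, Y, hW, hWY, hYshape⟩
  obtain ⟨hWsm, hWorth, hWrow⟩ := hW
  obtain ⟨hZsm, hZorth, hZrow⟩ := hZ
  have hXskew := frame_skew Z X hZsm hZorth hZX
  have hYskew := frame_skew W Y hWsm hWorth hWY
  have hXdiag : ∀ s i, X s i i = 0 := fun s i => by have := hXskew s i i; linarith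
  have hYdiag : ∀ s i, Y s i i = 0 := fun s i => by have := hYskew s i i; linarith
  have hZ1 := frame_orth_mul Z hZorth
  have hW1 := frame_orth_mul W hWorth
  have hZtZ : ∀ t, (Z t).transpose * Z t = 1 := fun t => mul_eq_one_comm.mp (hZ1 t)
  have hrow : ∀ t k, W t 0 k = Z t 0 k := fun t k => by
    rw [hWrow t trivial k, hZrow t trivial k]
  set G : ℝ → Mat4 := fun t => W t * (Z t).transpose with hGdef
  have hGentry : ∀ t i j, G t i j = ∑ k, W t i k * Z t j k := fun t i j => by
    simp [hGdef, Matrix.mul_apply]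
  -- first column and first row of G
  have hG0 : ∀ t j, G t 0 j = (1 : Mat4) 0 j := by
    intro t j
    rw [hGentry]
    have h := congrArg (fun M : Mat4 => M 0 j) (hZ1 t)
    simp only [Matrix.mul_apply, Matrix.transpose_apply] at h
    rw [← h]
    exact Finset.sum_congr rfl fun k _ => by rw [hrow]
  have hGi0 : ∀ t i, G t i 0 = (1 : Mat4) i 0 := by
    intro t i
    rw [hGentry]
    have h := congrArg (fun M : Mat4 => M i 0) (hW1 t)
    simp only [Matrix.mul_apply, Matrix.transpose_apply] at h
    rw [← h]
    exact Finset.sum_congr rfl fun k _ => by rw [hrow]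
  have hG10 : ∀ t, G t 1 0 = 0 := fun t => by simpa [Matrix.one_apply] using hGi0 t 1
  have hG20 : ∀ t, G t 2 0 = 0 := fun t => by simpa [Matrix.one_apply] using hGi0 t 2
  have hG30 : ∀ t, G t 3 0 = 0 := fun t => by simpa [Matrix.one_apply] using hGi0 t 3
  have hG00 : ∀ t, G t 0 0 = 1 := fun t => by simpa [Matrix.one_apply] using hGi0 t 0
  -- G is orthogonal
  have hGG : ∀ t, G t * (G t).transpose = 1 := by
    intro t
    show W t * (Z t).transpose * (W t * (Z t).transpose).transpose = 1
    rw [Matrix.transpose_mul, Matrix.transpose_transpose, Matrix.mul_assoc,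
      ← Matrix.mul_assoc (Z t).transpose, hZtZ t, Matrix.one_mul, hW1 t]
  -- derivative of G
  have hGD : ∀ s i j, HasDerivAt (fun t => G t i j)
      ((Y s * G s + G s * (X s).transpose) i j) s := by
    intro s i j
    have key : HasDerivAt (fun t => ∑ k, W t i k * Z t j k)
        (∑ k, ((Y s * W s) i k * Z s j k + W s i k * (X s * Z s) j k)) s :=
      HasDerivAt.fun_sum fun k _ =>
        (frame_hasDerivAt W Y hWsm hWY s i k).mul (frame_hasDerivAt Z X hZsm hZX s j k)
    have hfun : (fun t => G t i j) = fun t => ∑ k, W t i k * Z t j k :=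
      funext fun t => hGentry t i j
    rw [hfun]
    convert key using 1
    rw [Finset.sum_add_distrib, Matrix.add_apply]
    congr 1
    · rw [sum_mul_transpose, ← Matrix.mul_assoc]
    · rw [sum_mul_transpose, Matrix.transpose_mul, ← Matrix.mul_assoc]
  have hGdiff : ∀ i j, Differentiable ℝ fun t => G t i j := fun i j t =>
    (hGD t i j).differentiableAt
  have hGcont : ∀ i j, Continuous fun t => G t i j := fun i j => (hGdiff i j).continuous
  -- entries of X and Y
  have hX21 : ∀ s, X s 2 1 = 0 := fun s => by rw [hXskew s 1 2, (hshape s).1, neg_zero]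
  have hX31 : ∀ s, X s 3 1 = 0 := fun s => by rw [hXskew s 1 3, (hshape s).2.1, neg_zero]
  have hX32 : ∀ s, X s 3 2 = 0 := fun s => by rw [hXskew s 2 3, (hshape s).2.2, neg_zero]
  have hY21 : ∀ s, Y s 2 1 = 0 := fun s => by
    rw [hYskew s 1 2, (hYshape s trivial).2.1, neg_zero]
  have hY23 : ∀ s, Y s 2 3 = 0 := fun s => (hYshape s trivial).2.2
  have hY30 : ∀ s, Y s 3 0 = 0 := fun s => by
    rw [hYskew s 0 3, (hYshape s trivial).1, neg_zero]
  -- row 2 of G is constant (in columns 1,2,3)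
  have hconst : ∀ j : Fin 4, j ≠ 0 → ∀ x y : ℝ, G x 2 j = G y 2 j := by
    intro j hj
    apply is_const_of_deriv_eq_zero (hGdiff 2 j)
    intro s
    rw [(hGD s 2 j).deriv]
    have hG0j : G s 0 j = 0 := by
      rw [hG0]; exact Matrix.one_apply_ne (Ne.symm hj)
    have hXj : ∀ k : Fin 4, k ≠ 0 → X s j k = 0 := by
      intro k hk
      fin_cases j <;> fin_cases k <;>
        first
          | exact absurd rfl hj
          | exact absurd rfl hk
          | exact hXdiag s _
          | exact (hshape s).1
          | exact (hshape s).2.1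
          | exact (hshape s).2.2
          | exact hX21 s
          | exact hX31 s
          | exact hX32 s
    simp only [Matrix.add_apply, Matrix.mul_apply, Matrix.transpose_apply, Fin.sum_univ_four]
    rw [hYdiag, hY21, hY23, hG0j, hG20 s,
      hXj 1 (by decide), hXj 2 (by decide), hXj 3 (by decide)]
    ring
  -- the orthogonality relation b · c = 0
  have hbc : ∀ s, bump₁ s * G s 3 1 + bump₂ s * G s 3 2 + bump₃ s * G s 3 3 = 0 := by
    intro s
    have hzero : HasDerivAt (fun t => G t 3 0) 0 s := by
      have h : (fun t => G t 3 0) = fun _ => (0 : ℝ) := funext fun t => hG30 t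
      rw [h]; exact hasDerivAt_const s _
    have h := (hGD s 3 0).unique hzero
    simp only [Matrix.add_apply, Matrix.mul_apply, Matrix.transpose_apply,
      Fin.sum_univ_four] at h
    rw [hY30 s, hYdiag, hG00 s, hG10 s, hG20 s, hG30 s, hXdiag s, h₁ s, h₂ s, h₃ s] at h
    linarith
  -- row norms and orthogonality of rows 2 and 3
  have hnorm3 : ∀ t, G t 3 1 * G t 3 1 + G t 3 2 * G t 3 2 + G t 3 3 * G t 3 3 = 1 := by
    intro t
    have h := congrArg (fun M : Mat4 => M 3 3) (hGG t)
    simp only [Matrix.mul_apply, Matrix.transpose_apply, Fin.sum_univ_four,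
      Matrix.one_apply_eq] at h
    rw [hG30 t] at h; linarith
  have hnorm2 : ∀ t, G t 2 1 * G t 2 1 + G t 2 2 * G t 2 2 + G t 2 3 * G t 2 3 = 1 := by
    intro t
    have h := congrArg (fun M : Mat4 => M 2 2) (hGG t)
    simp only [Matrix.mul_apply, Matrix.transpose_apply, Fin.sum_univ_four,
      Matrix.one_apply_eq] at h
    rw [hG20 t] at h; linarith
  have horth23 : ∀ t, G t 2 1 * G t 3 1 + G t 2 2 * G t 3 2 + G t 2 3 * G t 3 3 = 0 := by
    intro t
    have h := congrArg (fun M : Mat4 => M 2 3) (hGG t)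
    simp only [Matrix.mul_apply, Matrix.transpose_apply, Fin.sum_univ_four] at h
    rw [hG20 t, hG30 t, Matrix.one_apply_ne (by decide : (2 : Fin 4) ≠ 3)] at h
    linarith
  -- vanishing of row-3 coefficients on the four intervals
  have hc1_neg : ∀ s ∈ Iio (0 : ℝ), G s 3 1 = 0 := by
    intro s hs
    have h := hbc s
    rw [bump₂_eq_zero (Or.inl (le_of_lt hs)), bump₃_eq_zero (Or.inl (by linarith [mem_Iio.mp hs]))] at h
    have h' : bump₁ s * G s 3 1 = 0 := by linarith
    exact (mul_eq_zero.mp h').resolve_left (ne_of_gt (bump₁_pos_of_neg hs))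
  have hc2_mid : ∀ s ∈ Ioo (0 : ℝ) 1, G s 3 2 = 0 := by
    intro s hs
    obtain ⟨hs0, hs1⟩ := hs
    have h := hbc s
    rw [bump₁_eq_zero (le_of_lt hs0) (by linarith), bump₃_eq_zero (Or.inl (le_of_lt hs1))] at h
    have h' : bump₂ s * G s 3 2 = 0 := by linarith
    exact (mul_eq_zero.mp h').resolve_left (ne_of_gt (bump₂_pos hs0 hs1))
  have hc3_mid : ∀ s ∈ Ioo (1 : ℝ) 2, G s 3 3 = 0 := by
    intro s hs
    obtain ⟨hs1, hs2⟩ := hs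
    have h := hbc s
    rw [bump₁_eq_zero (by linarith) (le_of_lt hs2), bump₂_eq_zero (Or.inr (le_of_lt hs1))] at h
    have h' : bump₃ s * G s 3 3 = 0 := by linarith
    exact (mul_eq_zero.mp h').resolve_left (ne_of_gt (bump₃_pos hs1 hs2))
  have hc1_pos : ∀ s ∈ Ioi (2 : ℝ), G s 3 1 = 0 := by
    intro s hs
    have hs2 : (2 : ℝ) < s := hs
    have h := hbc s
    rw [bump₂_eq_zero (Or.inr (by linarith)), bump₃_eq_zero (Or.inr (le_of_lt hs2))] at h
    have h' : bump₁ s * G s 3 1 = 0 := by linarith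
    exact (mul_eq_zero.mp h').resolve_left (ne_of_gt (bump₁_pos_of_gt hs2))
  -- extend to closures
  have hclo : ∀ (s : Set ℝ) (i j : Fin 4), (∀ x ∈ s, G x i j = 0) →
      ∀ x ∈ closure s, G x i j = 0 := by
    intro s i j h x hx
    exact Set.EqOn.closure (fun y hy => h y hy) (hGcont i j) continuous_const hx
  have e10 : G 0 3 1 = 0 :=
    hclo _ 3 1 hc1_neg 0 (by rw [closure_Iio]; exact self_mem_Iic)
  have e20 : G 0 3 2 = 0 :=
    hclo _ 3 2 hc2_mid 0 (by
      rw [closure_Ioo (by norm_num : (0 : ℝ) ≠ 1)]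
      exact ⟨le_refl 0, by norm_num⟩)
  have e21 : G 1 3 2 = 0 :=
    hclo _ 3 2 hc2_mid 1 (by
      rw [closure_Ioo (by norm_num : (0 : ℝ) ≠ 1)]
      exact ⟨by norm_num, le_refl 1⟩)
  have e31 : G 1 3 3 = 0 :=
    hclo _ 3 3 hc3_mid 1 (by
      rw [closure_Ioo (by norm_num : (1 : ℝ) ≠ 2)]
      exact ⟨le_refl 1, by norm_num⟩)
  have e32 : G 2 3 3 = 0 :=
    hclo _ 3 3 hc3_mid 2 (by
      rw [closure_Ioo (by norm_num : (1 : ℝ) ≠ 2)]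
      exact ⟨by norm_num, le_refl 2⟩)
  have e12 : G 2 3 1 = 0 :=
    hclo _ 3 1 hc1_pos 2 (by rw [closure_Ioi]; exact self_mem_Ici)
  -- conclude: row 2 of G vanishes
  have hd3 : G 0 2 3 = 0 := by
    have hc : G 0 3 3 * G 0 3 3 = 1 := by have := hnorm3 0; rw [e10, e20] at this; linarith
    have h := horth23 0
    rw [e10, e20] at h
    have h' : G 0 2 3 * G 0 3 3 = 0 := by linarith
    rcases mul_eq_zero.mp h' with h'' | h''
    · exact h''
    · rw [h''] at hc; norm_num at hc
  have hd1 : G 1 2 1 = 0 := by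
    have hc : G 1 3 1 * G 1 3 1 = 1 := by have := hnorm3 1; rw [e21, e31] at this; linarith
    have h := horth23 1
    rw [e21, e31] at h
    have h' : G 1 2 1 * G 1 3 1 = 0 := by linarith
    rcases mul_eq_zero.mp h' with h'' | h''
    · exact h''
    · rw [h''] at hc; norm_num at hc
  have hd2 : G 2 2 2 = 0 := by
    have hc : G 2 3 2 * G 2 3 2 = 1 := by have := hnorm3 2; rw [e12, e32] at this; linarith
    have h := horth23 2
    rw [e12, e32] at h
    have h' : G 2 2 2 * G 2 3 2 = 0 := by linarith
    rcases mul_eq_zero.mp h' with h'' | h''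
    · exact h''
    · rw [h''] at hc; norm_num at hc
  have f1 : G 0 2 1 = 0 := by rw [hconst 1 (by decide) 0 1]; exact hd1
  have f2 : G 0 2 2 = 0 := by rw [hconst 2 (by decide) 0 2]; exact hd2
  have h := hnorm2 0
  rw [f1, f2, hd3] at h
  norm_num at h
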